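/- arXiv:1705.05950 — 3 statements merged into one kernel-verified Lean document; each statement's English description precedes it below -/
import Mathlib

section
/- Let X be a probability space, ρ : X → ℝ nonnegative, bounded, measurable, and I an indicator of a measurable set with 0 < E[I] < 1. Then the objective L(I) = E[Iρ]/E[I] + E[(1−I)ρ]/(1−E[I]) satisfies L(I) ≤ ess sup ρ + E[ρ]. -/
/-!
Write `p = E[I]`, `a = E[Iρ]`, `b = E[(1-I)ρ]`, so that `a + b = E[ρ]`. Then
`a/p + b/(1-p) = (a + b) + (1-p)·(a/p) + p·(b/(1-p))`, and both conditional means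
`a/p` and `b/(1-p)` are at most `ess sup ρ`, so the last two terms add up to at most `ess sup ρ`.
-/

open MeasureTheory

lemma div_add_div_one_sub_le_add {a b p M : ℝ} (hp0 : 0 < p) (hp1 : p < 1)
    (ha : a ≤ p * M) (hb : b ≤ (1 - p) * M) :
    a / p + b / (1 - p) ≤ M + (a + b) := by
  have hq : 0 < 1 - p := sub_pos.mpr hp1
  have ha' : a / p ≤ M := (div_le_iff₀ hp0).mpr (by linarith)
  have hb' : b / (1 - p) ≤ M := (div_le_iff₀ hq).mpr (by linarith)
  calc a / p + b / (1 - p) = (a + b) + (1 - p) * (a / p) + p * (b / (1 - p)) := by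
        field_simp; ring
    _ ≤ (a + b) + (1 - p) * M + p * M := by gcongr
    _ = M + (a + b) := by ring

section

variable {X : Type*} [MeasurableSpace X] {μ : Measure X}

lemma integral_mul_le_integral_mul_const {w ρ : X → ℝ} {M : ℝ} (hw : Integrable w μ)
    (hwρ : Integrable (fun x => w x * ρ x) μ) (hw0 : ∀ᵐ x ∂μ, 0 ≤ w x)
    (hρM : ∀ᵐ x ∂μ, ρ x ≤ M) :
    ∫ x, w x * ρ x ∂μ ≤ (∫ x, w x ∂μ) * M := by
  rw [← integral_mul_const]
  refine integral_mono_ae hwρ (hw.mul_const M) ?_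
  filter_upwards [hw0, hρM] with x hx0 hxM
  exact mul_le_mul_of_nonneg_left hxM hx0

/-- The objective `L(w)` of the context, for a weight `w : X → [0, 1]`. -/
noncomputable def splitObjective (μ : Measure X) (ρ w : X → ℝ) : ℝ :=
  (∫ x, w x * ρ x ∂μ) / (∫ x, w x ∂μ) + (∫ x, (1 - w x) * ρ x ∂μ) / (1 - ∫ x, w x ∂μ)

lemma splitObjective_le_add_integral [IsProbabilityMeasure μ] {ρ w : X → ℝ} {M : ℝ}
    (hρ : Integrable ρ μ) (hρM : ∀ᵐ x ∂μ, ρ x ≤ M)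
    (hw : AEStronglyMeasurable w μ) (hw01 : ∀ᵐ x ∂μ, w x ∈ Set.Icc 0 1)
    (h0 : 0 < ∫ x, w x ∂μ) (h1 : ∫ x, w x ∂μ < 1) :
    splitObjective μ ρ w ≤ M + ∫ x, ρ x ∂μ := by
  have hw_int : Integrable w μ := .of_bound hw 1 <| by
    filter_upwards [hw01] with x ⟨hx0, hx1⟩
    rwa [Real.norm_of_nonneg hx0]
  have hwρ : Integrable (fun x => w x * ρ x) μ := hρ.bdd_mul hw <| by
    filter_upwards [hw01] with x ⟨hx0, hx1⟩
    rwa [Real.norm_of_nonneg hx0]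
  have hv_int : Integrable (fun x => 1 - w x) μ := (integrable_const 1).sub hw_int
  have hvρ : Integrable (fun x => (1 - w x) * ρ x) μ :=
    (hρ.sub hwρ).congr (.of_forall fun x => by simp only [Pi.sub_apply]; ring)
  have hv_integral : ∫ x, (1 - w x) ∂μ = 1 - ∫ x, w x ∂μ := by
    rw [integral_sub (integrable_const 1) hw_int, integral_const, probReal_univ, one_smul]
  have hsum : (∫ x, w x * ρ x ∂μ) + ∫ x, (1 - w x) * ρ x ∂μ = ∫ x, ρ x ∂μ := by
    rw [← integral_add hwρ hvρ]
    congr 1 with x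
    ring
  have ha := integral_mul_le_integral_mul_const hw_int hwρ (hw01.mono fun _ hx => hx.1) hρM
  have hb := integral_mul_le_integral_mul_const hv_int hvρ
    (hw01.mono fun _ hx => sub_nonneg.mpr hx.2) hρM
  rw [hv_integral] at hb
  rw [splitObjective, ← hsum]
  exact div_add_div_one_sub_le_add h0 h1 ha hb

end

/-- The objective `L(I) = E[Iρ]/E[I] + E[(1−I)ρ]/(1−E[I])` is bounded above by
`ess sup ρ + E[ρ]` for any indicator `I` with `0 < E[I] < 1`. -/
theorem objective_le_essSup_add_mean {X : Type*} [MeasurableSpace X] (μ : Measure X)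
    [IsProbabilityMeasure μ] (ρ : X → ℝ) (hρm : Measurable ρ) (hρ0 : ∀ x, 0 ≤ ρ x)
    (C : ℝ) (hbdd : ∀ x, ρ x ≤ C)
    (A : Set X) (hA : MeasurableSet A)
    (I : X → ℝ) (hI : I = A.indicator (fun _ => (1 : ℝ)))
    (h0 : 0 < ∫ x, I x ∂μ) (h1 : ∫ x, I x ∂μ < 1) :
    (∫ x, I x * ρ x ∂μ) / (∫ x, I x ∂μ) +
      (∫ x, (1 - I x) * ρ x ∂μ) / (1 - ∫ x, I x ∂μ) ≤
    essSup ρ μ + ∫ x, ρ x ∂μ := by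
  have hρ : Integrable ρ μ := .of_bound hρm.aestronglyMeasurable C <|
    .of_forall fun x => by rw [Real.norm_of_nonneg (hρ0 x)]; exact hbdd x
  have hI_meas : Measurable I := hI ▸ measurable_const.indicator hA
  have hI01 : ∀ x, I x ∈ Set.Icc 0 1 := fun x => by
    rw [hI]; by_cases hx : x ∈ A <;> simp [hx]
  exact splitObjective_le_add_integral hρ (ae_le_essSup (Filter.isBoundedUnder_of ⟨C, hbdd⟩))
    hI_meas.aestronglyMeasurable (.of_forall hI01) h0 h1
end

section
/- Let d : Ω × Ω → ℝ be symmetric with zero diagonal on a finite set Ω of n points. Then there exists h ≥ 0 and points f'_p ∈ ℝ^{n} such that ‖f'_p − f'_q‖² = d(p,q)² + h²·[p ≠ q] for all p, q (i.e., adding a sufficiently large constant to squared off-diagonal entries makes the matrix Euclidean). -/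
/-!
With `M p q = d(p,q)² / 2` and `c` a bound for the row sums of `M`, the matrix `A = c • 1 - M` is
diagonally dominant, hence positive semidefinite, hence the Gram matrix of vectors `f p`. Then
`‖f p - f q‖² = A p p + A q q - 2 A p q = d(p,q)² + 2c · [p ≠ q]`, so `h = √(2c)` works.
-/

open Matrix

namespace Matrix

variable {ι : Type*} [Fintype ι]

theorem dotProduct_mulVec_le_of_sum_row_le {M : Matrix ι ι ℝ} {c : ℝ} (hsymm : M.IsSymm)
    (hnonneg : ∀ i j, 0 ≤ M i j) (hrow : ∀ i, ∑ j, M i j ≤ c) (x : ι → ℝ) :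
    x ⬝ᵥ M *ᵥ x ≤ c * (x ⬝ᵥ x) := by
  have hswap : ∑ i, ∑ j, M i j * x j ^ 2 = ∑ i, ∑ j, M i j * x i ^ 2 := by
    rw [Finset.sum_comm]
    simp_rw [hsymm.apply]
  calc x ⬝ᵥ M *ᵥ x = ∑ i, ∑ j, M i j * (x i * x j) := by
        simp only [dotProduct, mulVec, Finset.mul_sum]
        exact Finset.sum_congr rfl fun i _ => Finset.sum_congr rfl fun j _ => by ring
    _ ≤ ∑ i, ∑ j, M i j * ((x i ^ 2 + x j ^ 2) / 2) := by
        gcongr with i _ j _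
        · exact hnonneg i j
        · nlinarith [sq_nonneg (x i - x j)]
    _ = (∑ i, ∑ j, M i j * x i ^ 2 + ∑ i, ∑ j, M i j * x j ^ 2) / 2 := by
        simp only [mul_add, add_div, Finset.sum_add_distrib, Finset.sum_div, mul_div_assoc]
    _ = ∑ i, (∑ j, M i j) * x i ^ 2 := by
        rw [hswap, add_self_div_two]
        simp only [Finset.sum_mul]
    _ ≤ ∑ i, c * x i ^ 2 := by
        gcongr with i _
        exact hrow i
    _ = c * (x ⬝ᵥ x) := by
        simp only [dotProduct, Finset.mul_sum, sq]

theorem posSemidef_smul_one_sub_of_sum_row_le [DecidableEq ι] {M : Matrix ι ι ℝ} {c : ℝ}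
    (hsymm : M.IsSymm) (hnonneg : ∀ i j, 0 ≤ M i j) (hrow : ∀ i, ∑ j, M i j ≤ c) :
    (c • 1 - M).PosSemidef := by
  rw [posSemidef_iff_dotProduct_mulVec, isHermitian_iff_isSymm]
  refine ⟨(isSymm_one.smul c).sub hsymm, fun x => ?_⟩
  have := dotProduct_mulVec_le_of_sum_row_le hsymm hnonneg hrow x
  simp only [star_trivial, sub_mulVec, smul_mulVec, one_mulVec, dotProduct_sub,
    dotProduct_smul, smul_eq_mul]
  linarith

open scoped ComplexOrder in
theorem PosSemidef.exists_eq_gram {𝕜 : Type*} [RCLike 𝕜] {A : Matrix ι ι 𝕜} (hA : A.PosSemidef) :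
    ∃ v : ι → EuclideanSpace 𝕜 ι, gram 𝕜 v = A := by
  classical
  open scoped MatrixOrder in
  obtain ⟨B, rfl⟩ := CStarAlgebra.nonneg_iff_eq_star_mul_self.mp hA.nonneg
  refine ⟨fun j => WithLp.toLp 2 fun i => B i j, ?_⟩
  rw [gram_eq_conjTranspose_mul (EuclideanSpace.basisFun ι 𝕜)]
  rfl

theorem exists_euclideanSpace_norm_sub_sq_of_posSemidef {A : Matrix ι ι ℝ} (hA : A.PosSemidef) :
    ∃ f : ι → EuclideanSpace ℝ (Fin (Fintype.card ι)),
      ∀ i j, ‖f i - f j‖ ^ 2 = A i i + A j j - 2 * A i j := by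
  obtain ⟨v, rfl⟩ := hA.exists_eq_gram
  let e := LinearIsometryEquiv.piLpCongrLeft 2 ℝ ℝ (Fintype.equivFin ι)
  refine ⟨fun i => e (v i), fun i j => ?_⟩
  rw [← map_sub, e.norm_map, norm_sub_sq_real]
  simp only [gram_apply, real_inner_self_eq_norm_sq]
  ring

end Matrix

/-- Any symmetric dissimilarity with zero diagonal becomes a Euclidean squared-distance
matrix after adding a large enough constant `h²` to the squared off-diagonal entries:
there exist `h ≥ 0` and an embedding `f'` into `ℝⁿ` with
`‖f'_p − f'_q‖² = d(p,q)² + h²·[p ≠ q]`. -/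
theorem euclidean_embedding_of_symmetric_dissimilarity
    {Ω : Type*} [Fintype Ω] [DecidableEq Ω]
    (d : Ω → Ω → ℝ) (hsymm : ∀ p q, d p q = d q p) (hdiag : ∀ p, d p p = 0) :
    ∃ h : ℝ, 0 ≤ h ∧ ∃ f' : Ω → EuclideanSpace ℝ (Fin (Fintype.card Ω)),
      ∀ p q, ‖f' p - f' q‖ ^ 2 = d p q ^ 2 + h ^ 2 * (if p ≠ q then 1 else 0) := by
  let M : Matrix Ω Ω ℝ := of fun p q => d p q ^ 2 / 2
  have hM_symm : M.IsSymm := IsSymm.ext fun p q => by simp [M, hsymm p q]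
  have hM_nonneg : ∀ p q, 0 ≤ M p q := fun p q => div_nonneg (sq_nonneg _) zero_le_two
  have hrow_nonneg : ∀ p, 0 ≤ ∑ q, M p q := fun p => Finset.sum_nonneg fun q _ => hM_nonneg p q
  let c := ∑ p, ∑ q, M p q
  have hrow : ∀ p, ∑ q, M p q ≤ c := fun p =>
    Finset.single_le_sum (fun p _ => hrow_nonneg p) (Finset.mem_univ p)
  have hc : 0 ≤ c := Finset.sum_nonneg fun p _ => hrow_nonneg p
  obtain ⟨f, hf⟩ := exists_euclideanSpace_norm_sub_sq_of_posSemidef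
    (posSemidef_smul_one_sub_of_sum_row_le hM_symm hM_nonneg hrow)
  refine ⟨√(2 * c), Real.sqrt_nonneg _, f, fun p q => ?_⟩
  rw [hf, Real.sq_sqrt (mul_nonneg zero_le_two hc)]
  rcases eq_or_ne p q with rfl | hpq
  · simp only [ne_eq, not_true_eq_false, if_false, hdiag]
    ring
  · simp only [ne_eq, hpq, not_false_eq_true, if_true, Matrix.sub_apply, Matrix.smul_apply,
      smul_eq_mul, one_apply_eq, one_apply_ne hpq, M, of_apply, hdiag]
    ring
end

section
/- (Breiman's theorem, two-cluster discrete Gini) Let P be a probability mass function on a finite set L with n = ∑_{l∈L} c_l points having feature value counts c_l > 0, and consider splitting L into two nonempty parts (L¹, L²), setting |S^k| = ∑_{l∈L^k} c_l and G(S^k) = 1 − ∑_{l∈L^k} (c_l/|S^k|)². Then the minimum over all 2-partitions of ∑_k |S^k|·G(S^k) is attained by the partition L¹ = {l*}, L² = L∖{l*}, where l* is a feature value with maximal count c_{l*}. -/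
/-!
Writing `|U|` for `∑_{l ∈ U} c_l`, the weighted Gini impurity of a cell is
`|U| · G(U) = |U| - (∑_{l ∈ U} c_l²) / |U|`, so minimising the criterion means maximising
`sqRatio c T + sqRatio c Tᶜ`, where `sqRatio c U = (∑_{l ∈ U} c_l²) / |U|`. By symmetry
`l*` lies in `T`; with `m = c_{l*}`, the bounds `m² ≤ ∑_T c² ≤ m |T|`, `∑_{Tᶜ} c² ≤ min (m |Tᶜ|) |Tᶜ|²` reduce the claim
to a rational inequality in five reals, proved by splitting on `|Tᶜ| ≤ m`.
-/

open Finset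

namespace Breiman

variable {L : Type*}

noncomputable def sqRatio (c : L → ℝ) (U : Finset L) : ℝ :=
  (∑ l ∈ U, c l ^ 2) / ∑ l ∈ U, c l

/-- For a cell of mass `0` both sides vanish because `x / 0 = 0`. -/
theorem mul_gini_eq (c : L → ℝ) (U : Finset L) :
    (∑ l ∈ U, c l) * (1 - ∑ l ∈ U, (c l / ∑ l' ∈ U, c l') ^ 2) =
      ∑ l ∈ U, c l - sqRatio c U := by
  simp only [sqRatio, div_pow, ← sum_div]
  rcases eq_or_ne (∑ l ∈ U, c l) 0 with h | h
  · simp [h]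
  · field_simp

theorem gini_split_eq [Fintype L] [DecidableEq L] (c : L → ℝ) (T : Finset L) :
    (∑ l ∈ T, c l) * (1 - ∑ l ∈ T, (c l / ∑ l' ∈ T, c l') ^ 2) +
        (∑ l ∈ Tᶜ, c l) * (1 - ∑ l ∈ Tᶜ, (c l / ∑ l' ∈ Tᶜ, c l') ^ 2) =
      ∑ l, c l - (sqRatio c T + sqRatio c Tᶜ) := by
  rw [mul_gini_eq, mul_gini_eq, ← sum_add_sum_compl T c]
  ring

theorem sum_sq_le_mul_sum {c : L → ℝ} {U : Finset L} {m : ℝ}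
    (hc : ∀ l ∈ U, 0 ≤ c l) (hm : ∀ l ∈ U, c l ≤ m) :
    ∑ l ∈ U, c l ^ 2 ≤ m * ∑ l ∈ U, c l := by
  rw [mul_sum]
  exact sum_le_sum fun l hl => by nlinarith [hc l hl, hm l hl]

/-- Here `m` is the maximal count, `s, q` the mass and square mass of the cell containing it,
and `t, r` those of the other cell. -/
theorem div_add_div_le_of_max (m s t q r : ℝ) (hm : 0 < m) (hms : m ≤ s) (ht : 0 < t)
    (hq : m ^ 2 ≤ q) (hqs : q ≤ m * s) (hrt : r ≤ m * t) (hrt2 : r ≤ t ^ 2) :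
    q / s + r / t ≤ m + (q + r - m ^ 2) / (s + t - m) := by
  have hs : 0 < s := hm.trans_le hms
  have hstm : 0 < s + t - m := by linarith
  rw [show m + (q + r - m ^ 2) / (s + t - m)
      = (m * (s + t - m) + (q + r - m ^ 2)) / (s + t - m) by field_simp,
    div_add_div _ _ hs.ne' ht.ne', div_le_div_iff₀ (by positivity) hstm]
  rcases le_total t m with h | h
  · nlinarith [mul_nonneg (mul_nonneg ht.le (sub_nonneg.2 h)) (sq_nonneg (s - m)),
      mul_nonneg (mul_nonneg ht.le (sub_nonneg.2 h)) (sub_nonneg.2 hq),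
      mul_nonneg (mul_nonneg hs.le (sub_nonneg.2 hms)) (sub_nonneg.2 hrt2)]
  · nlinarith [mul_nonneg (mul_nonneg ht.le (sub_nonneg.2 h)) (sub_nonneg.2 hqs),
      mul_nonneg (mul_nonneg hs.le (sub_nonneg.2 hms)) (sub_nonneg.2 hrt)]

theorem sqRatio_add_sqRatio_compl_le [Fintype L] [DecidableEq L] {c : L → ℝ}
    (hc : ∀ l, 0 < c l) {lstar : L} (hmax : ∀ l, c l ≤ c lstar) {T : Finset L}
    (hmem : lstar ∈ T) (hTc : Tᶜ.Nonempty) :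
    sqRatio c T + sqRatio c Tᶜ ≤ sqRatio c {lstar} + sqRatio c {lstar}ᶜ := by
  have hc0 : ∀ l ∈ univ, 0 ≤ c l := fun l _ => (hc l).le
  have hmass : ∑ l ∈ {lstar}ᶜ, c l = ∑ l ∈ T, c l + ∑ l ∈ Tᶜ, c l - c lstar := by
    linarith [sum_compl_add_sum {lstar} c, sum_add_sum_compl T c, sum_singleton c lstar]
  have hsq : ∑ l ∈ {lstar}ᶜ, c l ^ 2 =
      ∑ l ∈ T, c l ^ 2 + ∑ l ∈ Tᶜ, c l ^ 2 - c lstar ^ 2 := by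
    linarith [sum_compl_add_sum {lstar} (c · ^ 2), sum_add_sum_compl T (c · ^ 2),
      sum_singleton (c · ^ 2) lstar]
  have hsingle : sqRatio c {lstar} = c lstar := by
    simp only [sqRatio, sum_singleton]
    field_simp [(hc lstar).ne']
  rw [hsingle, sqRatio, sqRatio, sqRatio, hmass, hsq]
  exact div_add_div_le_of_max _ _ _ _ _ (hc lstar)
    (single_le_sum (fun l _ => (hc l).le) hmem)
    (sum_pos (fun l _ => hc l) hTc)
    (single_le_sum (f := (c · ^ 2)) (fun l _ => sq_nonneg _) hmem)
    (sum_sq_le_mul_sum (fun l _ => (hc l).le) fun l _ => hmax l)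
    (sum_sq_le_mul_sum (fun l _ => (hc l).le) fun l _ => hmax l)
    (sum_sq_le_sq_sum_of_nonneg fun l _ => (hc l).le)

end Breiman

open Breiman in
theorem breiman_gini_bias_general {L : Type*} [Fintype L] [DecidableEq L]
    (c : L → ℝ) (hc : ∀ l, 0 < c l)
    (lstar : L) (hmax : ∀ l, c l ≤ c lstar)
    (obj : Finset L → ℝ)
    (hobj : ∀ T : Finset L,
      obj T = (∑ l ∈ T, c l) * (1 - ∑ l ∈ T, (c l / ∑ l' ∈ T, c l') ^ 2) +
              (∑ l ∈ Tᶜ, c l) * (1 - ∑ l ∈ Tᶜ, (c l / ∑ l' ∈ Tᶜ, c l') ^ 2)) :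
    ∀ T : Finset L, T.Nonempty → Tᶜ.Nonempty → obj {lstar} ≤ obj T := by
  intro T hT hTc
  rw [hobj, hobj, gini_split_eq, gini_split_eq, sub_le_sub_iff_left]
  by_cases hmem : lstar ∈ T
  · exact sqRatio_add_sqRatio_compl_le hc hmax hmem hTc
  · have h := sqRatio_add_sqRatio_compl_le hc hmax (mem_compl.2 hmem)
      (by rwa [compl_compl])
    rwa [compl_compl, add_comm (sqRatio c Tᶜ)] at h

/-- Breiman's theorem (two-cluster discrete Gini criterion): the Gini criterion
`∑_k |S^k|·G(S^k)` over 2-partitions `(T, Tᶜ)` of a finite feature set `L` with positive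
counts `c` is minimized by splitting off a single feature value of maximal count. -/
theorem breiman_gini_bias {L : Type*} [Fintype L] [DecidableEq L]
    (hcard : 2 ≤ Fintype.card L)
    (c : L → ℝ) (hc : ∀ l, 0 < c l)
    (lstar : L) (hmax : ∀ l, c l ≤ c lstar)
    (obj : Finset L → ℝ)
    (hobj : ∀ T : Finset L,
      obj T = (∑ l ∈ T, c l) * (1 - ∑ l ∈ T, (c l / ∑ l' ∈ T, c l') ^ 2) +
              (∑ l ∈ Tᶜ, c l) * (1 - ∑ l ∈ Tᶜ, (c l / ∑ l' ∈ Tᶜ, c l') ^ 2)) :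
    ∀ T : Finset L, T.Nonempty → Tᶜ.Nonempty → obj {lstar} ≤ obj T :=
  breiman_gini_bias_general c hc lstar hmax obj hobj
end
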